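/- For all N ≥ 0, the sum over j ≥ 0 of q^{j^2+j} times the Gaussian binomial coefficient [N-j choose j]_q equals the sum over all integers λ of (-1)^λ q^{λ(5λ-3)/2} times [N+1 choose ⌊(N+1-5λ)/2⌋+1]_q. -/

import Mathlib

open Complex

noncomputable def qp (q x : ℂ) (n : ℕ) : ℂ := ∏ i ∈ Finset.range n, (1 - q ^ i * x)

noncomputable def qpi (q x : ℂ) : ℂ := ∏' i : ℕ, (1 - q ^ i * x)

noncomputable def jj (q z : ℂ) : ℂ := qpi q z * qpi q (q / z) * qpi q q

noncomputable def mAL (x q z : ℂ) : ℂ :=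
  (jj q z)⁻¹ * ∑' r : ℤ, (-1 : ℂ) ^ r * q ^ (r * (r - 1) / 2) * z ^ r / (1 - q ^ (r - 1) * x * z)

noncomputable def gUniv (x q : ℂ) : ℂ :=
  x⁻¹ * (-1 + ∑' n : ℕ, q ^ (n ^ 2) / (qp q x (n + 1) * qp q (q / x) n))

noncomputable def qpz (q x : ℂ) (n : ℤ) : ℂ := qpi q x / qpi q (x * q ^ n)

noncomputable def gauss (q : ℂ) (n : ℕ) (m : ℤ) : ℂ :=
  if 0 ≤ m ∧ m ≤ (n : ℤ) then qp q q n / (qp q q m.toNat * qp q q (n - m.toNat)) else 0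

/-!
Both sides, as functions of `N`, satisfy `S (N + 2) = S (N + 1) + q ^ (N + 2) * S N` with
`S 0 = S 1 = 1`. For the fermionic side `∑ j, q ^ (j² + j) [N - j, j]` this is the q-Pascal rule
applied termwise. For the bosonic side, two applications of q-Pascal show that each term satisfies
the recurrence up to a difference `W l - W (l + 1)`, where `W l` vanishes unless `N + 3 - 5 l` is
even; summed over `l ∈ ℤ` these differences telescope away.
-/

open Finset

lemma hasSum_sub_add_one {α : Type*} [AddCommGroup α] [TopologicalSpace α] [IsTopologicalAddGroup α]
    {f : ℤ → α} (hf : Summable f) : HasSum (fun l ↦ f l - f (l + 1)) 0 := by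
  simpa using hf.hasSum.sub ((Equiv.addRight (1 : ℤ)).hasSum_iff.2 hf.hasSum)

lemma pentagonal_succ (l : ℤ) : (l + 1) * (5 * (l + 1) - 3) / 2 = l * (5 * l - 3) / 2 + (5 * l + 1) := by
  rw [show (l + 1) * (5 * (l + 1) - 3) = l * (5 * l - 3) + (5 * l + 1) * 2 by ring,
    Int.add_mul_ediv_right _ _ two_ne_zero]

section Gauss

variable (q : ℂ)

lemma qp_succ (x : ℂ) (n : ℕ) : qp q x (n + 1) = qp q x n * (1 - q ^ n * x) :=
  prod_range_succ _ n

lemma qp_zero (x : ℂ) : qp q x 0 = 1 := prod_range_zero _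

lemma gauss_eq_zero {n : ℕ} {m : ℤ} (h : ¬(0 ≤ m ∧ m ≤ n)) : gauss q n m = 0 := if_neg h

lemma gauss_symm (n : ℕ) (m : ℤ) : gauss q n (n - m) = gauss q n m := by
  by_cases hm : 0 ≤ m ∧ m ≤ n
  · obtain ⟨k, rfl⟩ := Int.eq_ofNat_of_zero_le hm.1
    have hk : k ≤ n := by omega
    rw [gauss, gauss, if_pos (by omega), if_pos hm, show ((n : ℤ) - k).toNat = n - k by omega,
      Nat.sub_sub_self hk, Int.toNat_natCast, mul_comm]
  · rw [gauss_eq_zero q (by omega), gauss_eq_zero q hm]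

lemma gauss_add_eq_div (k d : ℕ) : gauss q (k + d) k = qp q q (k + d) / (qp q q k * qp q q d) := by
  rw [gauss, if_pos (by omega), Int.toNat_natCast, Nat.add_sub_cancel_left]

variable {q} (hqp : ∀ k : ℕ, qp q q k ≠ 0)
include hqp

lemma one_sub_pow_mul_ne_zero (n : ℕ) : 1 - q ^ n * q ≠ 0 :=
  right_ne_zero_of_mul (qp_succ q q n ▸ hqp (n + 1))

lemma gauss_zero_right (n : ℕ) : gauss q n 0 = 1 := by
  simpa only [zero_add, Nat.cast_zero, qp_zero, one_mul, div_self (hqp n)] using gauss_add_eq_div q 0 n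

lemma gauss_self (n : ℕ) : gauss q n n = 1 := by
  simpa only [add_zero, qp_zero, mul_one, div_self (hqp n)] using gauss_add_eq_div q n 0

lemma gauss_add_succ_succ (k d : ℕ) :
    gauss q (k + d + 1 + 1) (k + 1 : ℕ)
      = gauss q (k + d + 1) (k + 1 : ℕ) + q ^ (d + 1) * gauss q (k + d + 1) k := by
  have h₂ : gauss q (k + d + 1 + 1) (k + 1 : ℕ)
      = qp q q (k + d + 1 + 1) / (qp q q (k + 1) * qp q q (d + 1)) := by
    rw [show k + d + 1 + 1 = k + 1 + (d + 1) by ring, gauss_add_eq_div]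
  have h₁ : gauss q (k + d + 1) (k + 1 : ℕ) = qp q q (k + d + 1) / (qp q q (k + 1) * qp q q d) := by
    rw [show k + d + 1 = k + 1 + d by ring, gauss_add_eq_div]
  have h₀ : gauss q (k + d + 1) k = qp q q (k + d + 1) / (qp q q k * qp q q (d + 1)) := by
    rw [show k + d + 1 = k + (d + 1) by ring, gauss_add_eq_div]
  rw [h₂, h₁, h₀, qp_succ q q (k + d + 1), qp_succ q q k, qp_succ q q d,
    show q ^ (k + d + 1) * q = (q ^ k * q) * (q ^ d * q) by ring, pow_succ q d]
  have := hqp k; have := hqp d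
  have hx := one_sub_pow_mul_ne_zero hqp k; have hy := one_sub_pow_mul_ne_zero hqp d
  generalize q ^ k * q = x at hx ⊢; generalize q ^ d * q = y at hy ⊢
  field_simp
  ring

lemma gauss_succ (n : ℕ) (m : ℤ) :
    gauss q (n + 1) m = gauss q n m + q ^ ((n : ℤ) + 1 - m) * gauss q n (m - 1) := by
  rcases lt_or_ge m 0 with hm | hm
  · rw [gauss_eq_zero q (by omega), gauss_eq_zero q (by omega), gauss_eq_zero q (by omega)]
    ring
  obtain ⟨_ | k, rfl⟩ := Int.eq_ofNat_of_zero_le hm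
  · rw [Nat.cast_zero, gauss_zero_right hqp, gauss_zero_right hqp, gauss_eq_zero q (by omega)]
    ring
  rcases lt_trichotomy n k with hlt | rfl | hgt
  · rw [gauss_eq_zero q (by omega), gauss_eq_zero q (by omega), gauss_eq_zero q (by omega)]
    ring
  · rw [gauss_self hqp, gauss_eq_zero q (by omega), show ((n + 1 : ℕ) : ℤ) - 1 = n by push_cast; ring,
      gauss_self hqp]
    simp
  obtain ⟨d, rfl⟩ := Nat.exists_eq_add_of_lt hgt
  rw [gauss_add_succ_succ hqp, show ((k + 1 : ℕ) : ℤ) - 1 = k by push_cast; ring,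
    show ((k + d + 1 : ℕ) : ℤ) + 1 - (k + 1 : ℕ) = (d + 1 : ℕ) by push_cast; ring, zpow_natCast]

lemma gauss_succ' (n : ℕ) (m : ℤ) :
    gauss q (n + 1) m = q ^ m * gauss q n m + gauss q n (m - 1) := by
  rw [← gauss_symm q (n + 1) m, gauss_succ hqp, show ((n + 1 : ℕ) : ℤ) - m = n - (m - 1) by push_cast; ring,
    gauss_symm, show (n : ℤ) - (m - 1) - 1 = n - m by ring, gauss_symm,
    show (n : ℤ) + 1 - (n - (m - 1)) = m by ring, add_comm]

variable (hq : q ≠ 0)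
include hq

lemma gauss_add_two_succ (M : ℕ) (s : ℤ) :
    gauss q (M + 2) (s + 1)
      = gauss q (M + 1) s + q ^ (M + 1) * gauss q M s + q ^ (s + 1) * gauss q M (s + 1) := by
  rw [gauss_succ' hqp (M + 1), gauss_succ hqp M, add_sub_cancel_right]
  have : q ^ (s + 1) * q ^ ((M : ℤ) + 1 - (s + 1)) = q ^ (M + 1) := by
    rw [← zpow_add₀ hq, add_sub_cancel]; norm_cast
  linear_combination gauss q M s * this

lemma gauss_add_two_succ' (M : ℕ) (s : ℤ) :
    gauss q (M + 2) (s + 1)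
      = gauss q (M + 1) (s + 1) + q ^ (M + 1) * gauss q M s + q ^ ((M : ℤ) + 1 - s) * gauss q M (s - 1) := by
  rw [gauss_succ hqp (M + 1), add_sub_cancel_right, gauss_succ' hqp M s,
    show ((M + 1 : ℕ) : ℤ) + 1 - (s + 1) = M + 1 - s by push_cast; ring]
  have : q ^ ((M : ℤ) + 1 - s) * q ^ s = q ^ (M + 1) := by
    rw [← zpow_add₀ hq, sub_add_cancel]; norm_cast
  linear_combination gauss q M s * this

end Gauss

noncomputable def bosonicTerm (q : ℂ) (N : ℕ) (l : ℤ) : ℂ :=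
  (-1) ^ l * q ^ (l * (5 * l - 3) / 2) * gauss q (N + 1) (((N : ℤ) + 1 - 5 * l) / 2 + 1)

noncomputable def bosonicSum (q : ℂ) (N : ℕ) : ℂ := ∑' l : ℤ, bosonicTerm q N l

noncomputable def fermionicSum (q : ℂ) (N : ℕ) : ℂ :=
  ∑ j ∈ range (N + 1), q ^ (j ^ 2 + j) * gauss q (N - j) j

/- For `N + 3 - 5 l = 2 s` this is the leftover `q ^ (s + 1) [N + 1, s + 1]` of `gauss_add_two_succ`;
for `N + 3 - 5 l = 2 s + 1` the leftover of `gauss_add_two_succ'` is minus its value at `l + 1`. -/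
noncomputable def bosonicCorrection (q : ℂ) (N : ℕ) (l : ℤ) : ℂ :=
  if Even ((N : ℤ) + 3 - 5 * l) then
    (-1) ^ l * q ^ (l * (5 * l - 3) / 2 + ((N : ℤ) + 3 - 5 * l) / 2 + 1) *
      gauss q (N + 1) (((N : ℤ) + 5 - 5 * l) / 2)
  else 0

section Bosonic

variable {q : ℂ} (hq : q ≠ 0) (hqp : ∀ k : ℕ, qp q q k ≠ 0)
include hq hqp

lemma bosonicTerm_add_two (N : ℕ) (l : ℤ) :
    bosonicTerm q (N + 2) l = bosonicTerm q (N + 1) l + q ^ (N + 2) * bosonicTerm q N l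
      + (bosonicCorrection q N l - bosonicCorrection q N (l + 1)) := by
  obtain ⟨s, hs | hs⟩ := Int.even_or_odd' ((N : ℤ) + 3 - 5 * l)
  · rw [bosonicCorrection, if_pos ⟨s, by omega⟩, bosonicCorrection,
      if_neg (Int.not_even_iff_odd.2 ⟨s - 3, by omega⟩)]
    have h₂ : (((N + 2 : ℕ) : ℤ) + 1 - 5 * l) / 2 + 1 = s + 1 := by omega
    have h₁ : (((N + 1 : ℕ) : ℤ) + 1 - 5 * l) / 2 + 1 = s := by omega
    have h₀ : ((N : ℤ) + 1 - 5 * l) / 2 + 1 = s := by omega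
    have hc : ((N : ℤ) + 5 - 5 * l) / 2 = s + 1 := by omega
    have he : l * (5 * l - 3) / 2 + ((N : ℤ) + 3 - 5 * l) / 2 + 1 = l * (5 * l - 3) / 2 + (s + 1) := by
      omega
    simp only [bosonicTerm, h₂, h₁, h₀, hc, he]
    rw [show N + 2 + 1 = N + 1 + 2 from rfl, gauss_add_two_succ hqp hq (N + 1) s,
      zpow_add₀ hq (l * (5 * l - 3) / 2)]
    ring
  · rw [bosonicCorrection, if_neg (Int.not_even_iff_odd.2 ⟨s, by omega⟩), bosonicCorrection,
      if_pos ⟨s - 2, by omega⟩, pentagonal_succ]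
    have h₂ : (((N + 2 : ℕ) : ℤ) + 1 - 5 * l) / 2 + 1 = s + 1 := by omega
    have h₁ : (((N + 1 : ℕ) : ℤ) + 1 - 5 * l) / 2 + 1 = s + 1 := by omega
    have h₀ : ((N : ℤ) + 1 - 5 * l) / 2 + 1 = s := by omega
    have hc : ((N : ℤ) + 5 - 5 * (l + 1)) / 2 = s - 1 := by omega
    have he : l * (5 * l - 3) / 2 + (5 * l + 1) + ((N : ℤ) + 3 - 5 * (l + 1)) / 2 + 1
        = l * (5 * l - 3) / 2 + (((N + 1 : ℕ) : ℤ) + 1 - s) := by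
      omega
    simp only [bosonicTerm, h₂, h₁, h₀, hc, he]
    rw [show N + 2 + 1 = N + 1 + 2 from rfl, gauss_add_two_succ' hqp hq (N + 1) s,
      zpow_add₀ hq (l * (5 * l - 3) / 2), zpow_add_one₀ (neg_ne_zero.2 one_ne_zero)]
    ring

end Bosonic

section Support

variable (q : ℂ)

lemma summable_bosonicTerm (N : ℕ) : Summable (bosonicTerm q N) :=
  summable_of_ne_finset_zero (s := Icc (-(N : ℤ) - 1) (N + 1)) fun l hl ↦ by
    rw [mem_Icc] at hl
    rw [bosonicTerm, gauss_eq_zero q (by omega), mul_zero]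

lemma summable_bosonicCorrection (N : ℕ) : Summable (bosonicCorrection q N) :=
  summable_of_ne_finset_zero (s := Icc (-(N : ℤ) - 2) (N + 2)) fun l hl ↦ by
    rw [mem_Icc] at hl
    rw [bosonicCorrection, gauss_eq_zero q (by omega), mul_zero, ite_self]

end Support

section Recurrence

variable {q : ℂ} (hqp : ∀ k : ℕ, qp q q k ≠ 0)
include hqp

lemma bosonicSum_of_le_one {N : ℕ} (hN : N ≤ 1) : bosonicSum q N = 1 := by
  rw [bosonicSum, tsum_eq_single 0 fun l hl ↦ by rw [bosonicTerm, gauss_eq_zero q (by omega), mul_zero],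
    bosonicTerm, show ((N : ℤ) + 1 - 5 * 0) / 2 + 1 = ((N + 1 : ℕ) : ℤ) by omega, gauss_self hqp]
  simp

lemma fermionicSum_of_le_one {N : ℕ} (hN : N ≤ 1) : fermionicSum q N = 1 := by
  rw [fermionicSum, sum_eq_single 0 (fun j _ hj0 ↦ by rw [gauss_eq_zero q (by omega), mul_zero])
    (by simp), Nat.sub_zero, Nat.cast_zero, gauss_zero_right hqp]
  simp

variable (hq : q ≠ 0)
include hq

lemma bosonicSum_add_two (N : ℕ) :
    bosonicSum q (N + 2) = bosonicSum q (N + 1) + q ^ (N + 2) * bosonicSum q N := by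
  have h := ((summable_bosonicTerm q (N + 1)).hasSum.add
    ((summable_bosonicTerm q N).hasSum.mul_left (q ^ (N + 2)))).add
    (hasSum_sub_add_one (summable_bosonicCorrection q N))
  rw [add_zero, ← funext (bosonicTerm_add_two hq hqp N)] at h
  exact h.tsum_eq

lemma fermionicSum_add_two (N : ℕ) :
    fermionicSum q (N + 2) = fermionicSum q (N + 1) + q ^ (N + 2) * fermionicSum q N := by
  have hlast : gauss q (N + 2 - (N + 2)) (N + 2 : ℕ) = 0 := gauss_eq_zero q (by omega)
  have hsplit : ∀ j ∈ range (N + 2), q ^ (j ^ 2 + j) * gauss q (N + 2 - j) j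
      = q ^ (j ^ 2 + j) * gauss q (N + 1 - j) j
        + q ^ (j ^ 2 + j) * q ^ ((N : ℤ) + 2 - 2 * j) * gauss q (N + 1 - j) (j - 1) := by
    intro j hj
    rw [mem_range] at hj
    rw [show N + 2 - j = N + 1 - j + 1 by omega, gauss_succ hqp,
      show ((N + 1 - j : ℕ) : ℤ) + 1 - j = N + 2 - 2 * j by omega]
    ring
  have hshift : ∀ i ∈ range (N + 1),
      q ^ ((i + 1) ^ 2 + (i + 1)) * q ^ ((N : ℤ) + 2 - 2 * (i + 1 : ℕ))
          * gauss q (N + 1 - (i + 1)) ((i + 1 : ℕ) - 1)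
        = q ^ (N + 2) * (q ^ (i ^ 2 + i) * gauss q (N - i) i) := by
    intro i _
    have hpow : q ^ ((i + 1) ^ 2 + (i + 1)) * q ^ ((N : ℤ) + 2 - 2 * (i + 1 : ℕ))
        = q ^ (N + 2) * q ^ (i ^ 2 + i) := by
      simp only [← zpow_natCast, ← zpow_add₀ hq]
      congr 1
      push_cast
      ring
    rw [hpow, Nat.add_sub_add_right, Nat.cast_add_one, add_sub_cancel_right, mul_assoc]
  rw [fermionicSum, sum_range_succ, hlast, mul_zero, add_zero, sum_congr rfl hsplit, sum_add_distrib]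
  congr 1
  rw [sum_range_succ', sum_congr rfl hshift, ← mul_sum, Nat.cast_zero, zero_sub,
    gauss_eq_zero q (by omega), mul_zero, add_zero]
  rfl

lemma fermionicSum_eq_bosonicSum (N : ℕ) : fermionicSum q N = bosonicSum q N := by
  induction N using Nat.twoStepInduction with
  | zero => rw [fermionicSum_of_le_one hqp zero_le_one, bosonicSum_of_le_one hqp zero_le_one]
  | one => rw [fermionicSum_of_le_one hqp le_rfl, bosonicSum_of_le_one hqp le_rfl]
  | more n ih₀ ih₁ =>
    rw [fermionicSum_add_two hqp hq, bosonicSum_add_two hqp hq, ih₀, ih₁]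

end Recurrence

/-- Schur's finite Rogers-Ramanujan identity (Andrews 4.2). -/
theorem schur_finite_RR_second (q : ℂ) (hq : q ≠ 0) (hqp : ∀ k : ℕ, qp q q k ≠ 0) (N : ℕ) :
    ∑' j : ℕ, q ^ (j ^ 2 + j) * gauss q (N - j) (j : ℤ)
      = ∑' l : ℤ, (-1 : ℂ) ^ l * q ^ (l * (5 * l - 3) / 2) *
          gauss q (N + 1) (Int.fdiv ((N : ℤ) + 1 - 5 * l) 2 + 1) := by
  have hfermionic : ∑' j : ℕ, q ^ (j ^ 2 + j) * gauss q (N - j) (j : ℤ) = fermionicSum q N :=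
    tsum_eq_sum fun j hj ↦ by
      rw [mem_range] at hj
      rw [gauss_eq_zero q (by omega), mul_zero]
  simp only [Int.fdiv_eq_ediv_of_nonneg _ zero_le_two]
  rw [hfermionic, fermionicSum_eq_bosonicSum hqp hq]
  rfl
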